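/- arXiv:1404.0195 — 7 statements merged into one kernel-verified Lean document; each statement's English description precedes it below -/
import Mathlib

section
/- Let S be a commutative ring with identity of characteristic 2, let C be a self-dual code of length n over S (a submodule of S^n equal to its Euclidean dual) generated by the rows r_1,...,r_k of a k×n matrix G. Let c be a unit in S with c^2 = 1 and let X ∈ S^n satisfy ⟨X,X⟩ = 1. Set y_i = ⟨r_i, X⟩. Then the code D of length n+2 generated by the row (1,0,X) together with the rows (y_i, c·y_i, r_i) for 1 ≤ i ≤ k is self-orthogonal, i.e., every pair of its generating rows has Euclidean inner product 0. -/
/-- Extension theorem (Theorem 4.1): extending a self-dual code over a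
commutative ring of characteristic 2 by `(1,0,X)` and `(y_i, c·y_i, r_i)`
gives pairwise orthogonal generating rows. -/
theorem stmt_0 {S : Type*} [CommRing S] (hchar : (1 : S) + 1 = 0)
    {n k : ℕ} (G : Fin k → Fin n → S)
    (C : Submodule S (Fin n → S))
    (hgen : Submodule.span S (Set.range G) = C)
    (hsd : (C : Set (Fin n → S)) = {x | ∀ y ∈ C, ∑ i, x i * y i = 0})
    (c : S) (hc : IsUnit c) (hc2 : c * c = 1)
    (X : Fin n → S) (hX : ∑ i, X i * X i = 1)
    (y : Fin k → S) (hy : ∀ i, y i = ∑ j, G i j * X j) :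
    ((1 : S) * 1 + 0 * 0 + ∑ i, X i * X i = 0) ∧
    (∀ i, y i * 1 + (c * y i) * 0 + ∑ j, G i j * X j = 0) ∧
    (∀ i j, y i * y j + (c * y i) * (c * y j) + ∑ t, G i t * G j t = 0) := by
  have hmem : ∀ i, G i ∈ C := fun i => hgen ▸ Submodule.subset_span ⟨i, rfl⟩
  have horth : ∀ i j, ∑ t, G i t * G j t = 0 := by
    intro i j
    have h1 := (Set.ext_iff.mp hsd (G i)).mp (hmem i)
    exact h1 (G j) (hmem j)
  refine ⟨by rw [hX]; rw [show (1:S)*1+0*0+1 = 1+1 by ring, hchar], fun i => ?_, fun i j => ?_⟩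
  · rw [← hy i]
    have : y i * 1 + c * y i * 0 + y i = y i * (1 + 1) := by ring
    rw [this, hchar, mul_zero]
  · rw [horth i j]
    have : y i * y j + c * y i * (c * y j) + 0 = y i * y j * (1 + c * c) := by ring
    rw [this, hc2, hchar, mul_zero]
end

section
/- Let S be a commutative ring with identity of characteristic 2, and let C be a self-orthogonal code over S of length 2n generated by the matrix [I_n | A] where A is an n×n matrix over S. Let r_i denote the sum of the entries of the i-th row of A, let c be a unit in S with c^2 = 1, and let X = (x_1,...,x_n) ∈ S^n satisfy ⟨X,X⟩ = 1 + n·1 (where n·1 is n copies of 1 summed in S). Set y_i = x_i + r_i. Then the rows of the matrix whose first row is (1, 0, x_1,...,x_n, 1,...,1) (with n ones at the end) and whose remaining rows are (y_i, c·y_i, e_i, a_i) — where e_i is the i-th standard basis vector and a_i the i-th row of A — are pairwise Euclidean-orthogonal and each is self-orthogonal. -/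
/-- Extension theorem for codes generated by `[I_n | A]` over a commutative ring
of characteristic 2: the rows of the extended matrix are pairwise orthogonal
and self-orthogonal. -/
theorem stmt_1 {S : Type*} [CommRing S] (hchar : (1 : S) + 1 = 0)
    {n : ℕ} (A : Matrix (Fin n) (Fin n) S)
    (hso : ∀ i j, (if i = j then (1 : S) else 0) + ∑ t, A i t * A j t = 0)
    (r : Fin n → S) (hr : ∀ i, r i = ∑ t, A i t)
    (c : S) (hc : IsUnit c) (hc2 : c * c = 1)
    (X : Fin n → S) (hX : ∑ i, X i * X i = 1 + n • (1 : S))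
    (y : Fin n → S) (hy : ∀ i, y i = X i + r i) :
    ((1 : S) * 1 + 0 * 0 + (∑ i, X i * X i) + ∑ _i : Fin n, (1 : S) * 1 = 0) ∧
    (∀ i, y i * 1 + (c * y i) * 0 + (∑ t, (if i = t then (1 : S) else 0) * X t)
        + ∑ t, A i t * 1 = 0) ∧
    (∀ i j, y i * y j + (c * y i) * (c * y j)
        + (∑ t, (if i = t then (1 : S) else 0) * (if j = t then (1 : S) else 0))
        + ∑ t, A i t * A j t = 0) := by
  refine ⟨?_, ?_, ?_⟩
  · rw [hX]
    simp only [one_mul, mul_zero, zero_mul, add_zero, Finset.sum_const,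
      Finset.card_univ, Fintype.card_fin, smul_eq_mul, mul_one]
    linear_combination (1 + n • (1 : S)) * hchar
  · intro i
    rw [hy, hr]
    have hd : (∑ t, (if i = t then (1 : S) else 0) * X t) = X i := by
      rw [Finset.sum_eq_single i] <;> simp +contextual [Ne.symm]
    rw [hd]
    simp only [mul_one, mul_zero, add_zero, one_mul]
    linear_combination (X i + ∑ t, A i t) * hchar
  · intro i j
    have hd : (∑ t, (if i = t then (1 : S) else 0) * (if j = t then (1 : S) else 0))
        = if i = j then 1 else 0 := by
      rw [Finset.sum_eq_single i]
      · simp [eq_comm]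
      · intro b _ hb; simp [Ne.symm hb]
      · simp
    rw [hd]
    linear_combination hso i j + y i * y j * hc2 + y i * y j * hchar
end

section
/- Let R be a commutative ring of characteristic 2 and let A, B be n×n circulant matrices over R satisfying A·Aᵀ + B·Bᵀ = I_n. Then the linear code C of length 4n over R generated by the rows of the block matrix [I_{2n} | M], where M is the 2n×2n matrix with blocks A, B in the top row and Bᵀ, Aᵀ in the bottom row, is self-orthogonal with respect to the Euclidean inner product: every two rows of the generator matrix have inner product 0. -/
open Matrix

private lemma stmt_2_aux {R : Type*} [CommRing R] (hchar : (1 : R) + 1 = 0) {m : ℕ}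
    (A B : Matrix (Fin (m + 1)) (Fin (m + 1)) R)
    (hA : ∃ a : Fin (m + 1) → R, ∀ i j, A i j = a (j - i))
    (hB : ∃ b : Fin (m + 1) → R, ∀ i j, B i j = b (j - i))
    (h : A * Aᵀ + B * Bᵀ = 1) :
    ∀ i j : Fin (m + 1) ⊕ Fin (m + 1),
      (∑ t : Fin (m + 1) ⊕ Fin (m + 1),
          (if i = t then (1 : R) else 0) * (if j = t then (1 : R) else 0))
        + ∑ t, (Matrix.fromBlocks A B Bᵀ Aᵀ) i t * (Matrix.fromBlocks A B Bᵀ Aᵀ) j t = 0 := by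
  obtain ⟨a, ha⟩ := hA
  obtain ⟨b, hb⟩ := hB
  have hAc : A = circulant (fun i : Fin (m + 1) => a (-i)) := by
    ext i j; simp [circulant_apply, ha i j, neg_sub]
  have hBc : B = circulant (fun i : Fin (m + 1) => b (-i)) := by
    ext i j; simp [circulant_apply, hb i j, neg_sub]
  have hATc : Aᵀ = circulant (fun i : Fin (m + 1) => a i) := by
    rw [hAc, transpose_circulant]; simp
  have hBTc : Bᵀ = circulant (fun i : Fin (m + 1) => b i) := by
    rw [hBc, transpose_circulant]; simp
  have double : ∀ {I : Type} [Fintype I] [DecidableEq I] (X : Matrix I I R), X + X = 0 := by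
    intro I _ _ X; ext i j
    have : X i j + X i j = (1 + 1) * X i j := by ring
    simp [Matrix.add_apply, this, hchar]
  have hAB : A * B = B * A := by rw [hAc, hBc]; exact circulant_mul_comm _ _
  have hBTAT : Bᵀ * Aᵀ = Aᵀ * Bᵀ := by rw [hATc, hBTc]; exact circulant_mul_comm _ _
  have hAAT : Aᵀ * A = A * Aᵀ := by
    have := circulant_mul_comm (fun i : Fin (m + 1) => a i) (fun i : Fin (m + 1) => a (-i))
    rw [← hATc, ← hAc] at this; exact this
  have hBBT : Bᵀ * B = B * Bᵀ := by
    have := circulant_mul_comm (fun i : Fin (m + 1) => b i) (fun i : Fin (m + 1) => b (-i))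
    rw [← hBTc, ← hBc] at this; exact this
  set M : Matrix (Fin (m + 1) ⊕ Fin (m + 1)) (Fin (m + 1) ⊕ Fin (m + 1)) R :=
    Matrix.fromBlocks A B Bᵀ Aᵀ with hM
  have hMT : Mᵀ = Matrix.fromBlocks Aᵀ B Bᵀ A := by
    rw [hM]; ext (i | i) (j | j) <;> simp [Matrix.fromBlocks, Matrix.transpose_apply]
  have key : M * Mᵀ = 1 := by
    rw [hMT, hM, fromBlocks_multiply]
    have h1 : A * B + B * A = 0 := by rw [hAB]; exact double _
    have h2 : Bᵀ * Aᵀ + Aᵀ * Bᵀ = 0 := by rw [hBTAT]; exact double _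
    have h3 : Bᵀ * B + Aᵀ * A = 1 := by rw [hAAT, hBBT, add_comm (B * Bᵀ)]; exact h
    rw [h, h1, h2, h3, fromBlocks_one]
  have final : (1 : Matrix (Fin (m + 1) ⊕ Fin (m + 1)) (Fin (m + 1) ⊕ Fin (m + 1)) R)
      + M * Mᵀ = 0 := by
    rw [key]; exact double 1
  intro i j
  have e1 : (∑ t : Fin (m + 1) ⊕ Fin (m + 1),
      (if i = t then (1 : R) else 0) * (if j = t then (1 : R) else 0))
      = (1 : Matrix (Fin (m + 1) ⊕ Fin (m + 1)) (Fin (m + 1) ⊕ Fin (m + 1)) R) i j := by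
    simp [Matrix.one_apply, Finset.sum_ite_eq, eq_comm]
  have e2 : (∑ t, M i t * M j t) = (M * Mᵀ) i j := by
    simp [Matrix.mul_apply]
  rw [e1, e2, ← Matrix.add_apply, final, Matrix.zero_apply]

/-- Four-circulant construction: if `A`, `B` are circulant with
`A·Aᵀ + B·Bᵀ = I`, the rows of `[I | (A B ; Bᵀ Aᵀ)]` are pairwise orthogonal. -/
theorem stmt_2 {R : Type*} [CommRing R] (hchar : (1 : R) + 1 = 0) {n : ℕ}
    (A B : Matrix (Fin n) (Fin n) R)
    (hA : ∃ a : Fin n → R, ∀ i j, A i j = a (j - i))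
    (hB : ∃ b : Fin n → R, ∀ i j, B i j = b (j - i))
    (h : A * Aᵀ + B * Bᵀ = 1) :
    ∀ i j : Fin n ⊕ Fin n,
      (∑ t : Fin n ⊕ Fin n, (if i = t then (1 : R) else 0) * (if j = t then (1 : R) else 0))
        + ∑ t, (Matrix.fromBlocks A B Bᵀ Aᵀ) i t * (Matrix.fromBlocks A B Bᵀ Aᵀ) j t = 0 := by
  cases n with
  | zero => rintro (i | i) <;> exact i.elim0
  | succ m => exact stmt_2_aux hchar A B hA hB h
end

section
/- The map ψ : F₄+uF₄ → (F₂+uF₂)² defined by ψ(aω + bω̄) = (a, b) for a, b ∈ F₂+uF₂ is an (F₂+uF₂)-module isomorphism, and it preserves Euclidean orthogonality: ⟨x,y⟩ = 0 in F₄+uF₄ implies ⟨ψ(x), ψ(y)⟩ = 0 in F₂+uF₂, where the inner product on (F₂+uF₂)² is the Euclidean one. -/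
/-- The Gray map ψ : F₄+uF₄ → (F₂+uF₂)², ψ(ωa + ω̄b) = (a,b), is an
(F₂+uF₂)-module isomorphism preserving Euclidean orthogonality. -/
theorem stmt_8 (ω : GaloisField 2 2) (hω : ω ^ 2 + ω + 1 = 0)
    (α β : GaloisField 2 2 → ZMod 2)
    (hrep : ∀ t, t = algebraMap (ZMod 2) (GaloisField 2 2) (α t) * ω +
        algebraMap (ZMod 2) (GaloisField 2 2) (β t) * (1 + ω)) :
    let ψ : DualNumber (GaloisField 2 2) → DualNumber (ZMod 2) × DualNumber (ZMod 2) :=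
      fun x =>
        (TrivSqZeroExt.inl (α (TrivSqZeroExt.fst x)) +
           TrivSqZeroExt.inr (α (TrivSqZeroExt.snd x)),
         TrivSqZeroExt.inl (β (TrivSqZeroExt.fst x)) +
           TrivSqZeroExt.inr (β (TrivSqZeroExt.snd x)))
    let ι : DualNumber (ZMod 2) → DualNumber (GaloisField 2 2) := fun s =>
      TrivSqZeroExt.inl (algebraMap (ZMod 2) (GaloisField 2 2) (TrivSqZeroExt.fst s)) +
        TrivSqZeroExt.inr (algebraMap (ZMod 2) (GaloisField 2 2) (TrivSqZeroExt.snd s))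
    Function.Bijective ψ ∧
    (∀ x y, ψ (x + y) = ψ x + ψ y) ∧
    (∀ s x, ψ (ι s * x) = (s * (ψ x).1, s * (ψ x).2)) ∧
    (∀ x y, x * y = 0 → (ψ x).1 * (ψ y).1 + (ψ x).2 * (ψ y).2 = 0) := by
  intro ψ ι
  have h2 : (2 : GaloisField 2 2) = 0 := by
    have := CharP.cast_eq_zero (GaloisField 2 2) 2
    exact_mod_cast this
  have h2' : (2 : ZMod 2) = 0 := rfl
  -- independence of ω and 1+ω over F₂
  have two_cases : ∀ c : ZMod 2, c = 0 ∨ c = 1 := by decide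
  have indep : ∀ a b : ZMod 2,
      algebraMap (ZMod 2) (GaloisField 2 2) a * ω +
        algebraMap (ZMod 2) (GaloisField 2 2) b * (1 + ω) = 0 → a = 0 ∧ b = 0 := by
    intro a b h
    rcases two_cases a with ha | ha <;> rcases two_cases b with hb | hb <;>
        subst ha <;> subst hb <;>
        simp only [map_zero, map_one, zero_mul, one_mul, add_zero, zero_add] at h
    · exact ⟨rfl, rfl⟩
    · exfalso
      have h1 : (1 : GaloisField 2 2) = 0 := by linear_combination hω - ω * h
      exact one_ne_zero h1
    · exfalso
      have h1 : (1 : GaloisField 2 2) = 0 := by linear_combination hω - (ω + 1) * h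
      exact one_ne_zero h1
    · exfalso
      have h1 : (1 : GaloisField 2 2) = 0 := by linear_combination h - ω * h2
      exact one_ne_zero h1
  -- coordinates are unique
  have coord : ∀ (t : GaloisField 2 2) (a b : ZMod 2),
      t = algebraMap (ZMod 2) (GaloisField 2 2) a * ω +
        algebraMap (ZMod 2) (GaloisField 2 2) b * (1 + ω) → α t = a ∧ β t = b := by
    intro t a b h
    have key : algebraMap (ZMod 2) (GaloisField 2 2) (α t - a) * ω +
        algebraMap (ZMod 2) (GaloisField 2 2) (β t - b) * (1 + ω) = 0 := by
      rw [map_sub, map_sub]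
      linear_combination h - hrep t
    obtain ⟨h1, h2''⟩ := indep _ _ key
    exact ⟨sub_eq_zero.mp h1, sub_eq_zero.mp h2''⟩
  have a0 : α 0 = 0 := (coord 0 0 0 (by simp)).1
  have b0 : β 0 = 0 := (coord 0 0 0 (by simp)).2
  have hadd : ∀ s t, α (s + t) = α s + α t ∧ β (s + t) = β s + β t := by
    intro s t
    exact coord _ _ _ (by rw [map_add, map_add]; linear_combination hrep s + hrep t)
  have hsmul : ∀ (c : ZMod 2) t,
      α (algebraMap (ZMod 2) (GaloisField 2 2) c * t) = c * α t ∧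
      β (algebraMap (ZMod 2) (GaloisField 2 2) c * t) = c * β t := by
    intro c t
    exact coord _ _ _ (by
      rw [map_mul, map_mul]
      linear_combination algebraMap (ZMod 2) (GaloisField 2 2) c * hrep t)
  have hmulc : ∀ s t, α (s * t) = α s * β t + β s * α t + β s * β t ∧
      β (s * t) = α s * α t + α s * β t + β s * α t := by
    intro s t
    refine coord _ _ _ ?_
    simp only [map_add, map_mul]
    linear_combination t * hrep s +
      (algebraMap (ZMod 2) (GaloisField 2 2) (α s) * ω +
       algebraMap (ZMod 2) (GaloisField 2 2) (β s) * (1 + ω)) * hrep t +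
      (algebraMap (ZMod 2) (GaloisField 2 2) (α s) * algebraMap (ZMod 2) (GaloisField 2 2) (α t) +
       algebraMap (ZMod 2) (GaloisField 2 2) (α s) * algebraMap (ZMod 2) (GaloisField 2 2) (β t) +
       algebraMap (ZMod 2) (GaloisField 2 2) (β s) * algebraMap (ZMod 2) (GaloisField 2 2) (α t) +
       algebraMap (ZMod 2) (GaloisField 2 2) (β s) * algebraMap (ZMod 2) (GaloisField 2 2) (β t)) * hω -
      (ω + 1) *
      (algebraMap (ZMod 2) (GaloisField 2 2) (α s) * algebraMap (ZMod 2) (GaloisField 2 2) (α t) +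
       algebraMap (ZMod 2) (GaloisField 2 2) (α s) * algebraMap (ZMod 2) (GaloisField 2 2) (β t) +
       algebraMap (ZMod 2) (GaloisField 2 2) (β s) * algebraMap (ZMod 2) (GaloisField 2 2) (α t)) * h2
  have hmul : ∀ s t, α s * α t + β s * β t = α (s * t) + β (s * t) := by
    intro s t
    rw [(hmulc s t).1, (hmulc s t).2]
    linear_combination -(α s * β t + β s * α t) * h2'
  refine ⟨?_, ?_, ?_, ?_⟩
  · -- bijectivity via explicit inverse
    refine Function.bijective_iff_has_inverse.mpr
      ⟨fun p => TrivSqZeroExt.inl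
          (algebraMap (ZMod 2) (GaloisField 2 2) (TrivSqZeroExt.fst p.1) * ω +
           algebraMap (ZMod 2) (GaloisField 2 2) (TrivSqZeroExt.fst p.2) * (1 + ω)) +
        TrivSqZeroExt.inr
          (algebraMap (ZMod 2) (GaloisField 2 2) (TrivSqZeroExt.snd p.1) * ω +
           algebraMap (ZMod 2) (GaloisField 2 2) (TrivSqZeroExt.snd p.2) * (1 + ω)), ?_, ?_⟩
    · intro x
      ext <;> simp [ψ] <;> [exact (hrep _).symm; exact (hrep _).symm]
    · intro p
      have c1 := coord (algebraMap (ZMod 2) (GaloisField 2 2) (TrivSqZeroExt.fst p.1) * ω +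
          algebraMap (ZMod 2) (GaloisField 2 2) (TrivSqZeroExt.fst p.2) * (1 + ω)) _ _ rfl
      have c2 := coord (algebraMap (ZMod 2) (GaloisField 2 2) (TrivSqZeroExt.snd p.1) * ω +
          algebraMap (ZMod 2) (GaloisField 2 2) (TrivSqZeroExt.snd p.2) * (1 + ω)) _ _ rfl
      ext <;> simp [ψ, c1.1, c1.2, c2.1, c2.2]
  · intro x y
    ext <;> simp [ψ, (hadd _ _).1, (hadd _ _).2]
  · intro s x
    refine Prod.ext ?_ ?_ <;> refine TrivSqZeroExt.ext ?_ ?_ <;>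
      simp only [ψ, ι, TrivSqZeroExt.fst_add, TrivSqZeroExt.snd_add, TrivSqZeroExt.fst_inl,
        TrivSqZeroExt.snd_inl, TrivSqZeroExt.fst_inr, TrivSqZeroExt.snd_inr,
        TrivSqZeroExt.fst_mul, TrivSqZeroExt.snd_mul, add_zero, zero_add,
        smul_eq_mul, MulOpposite.smul_eq_mul_unop, MulOpposite.unop_op] <;>
      first
        | rw [(hsmul _ _).1]
        | rw [(hsmul _ _).2]
        | (rw [(hadd _ _).1, (hsmul _ _).1, (hsmul _ _).1]; try ring)
        | (rw [(hadd _ _).2, (hsmul _ _).2, (hsmul _ _).2]; try ring)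
  · intro x y hxy
    have h00 : TrivSqZeroExt.fst x * TrivSqZeroExt.fst y = 0 := by
      have := congrArg TrivSqZeroExt.fst hxy; simpa using this
    have h01 : TrivSqZeroExt.fst x * TrivSqZeroExt.snd y +
        TrivSqZeroExt.snd x * TrivSqZeroExt.fst y = 0 := by
      have h := congrArg TrivSqZeroExt.snd hxy
      simp only [TrivSqZeroExt.snd_mul, TrivSqZeroExt.snd_zero, smul_eq_mul,
        MulOpposite.smul_eq_mul_unop, MulOpposite.unop_op] at h
      exact h
    have key1 : α (TrivSqZeroExt.fst x) * α (TrivSqZeroExt.fst y) +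
        β (TrivSqZeroExt.fst x) * β (TrivSqZeroExt.fst y) = 0 := by
      rw [hmul, h00, a0, b0, add_zero]
    have key2 : α (TrivSqZeroExt.fst x) * α (TrivSqZeroExt.snd y) +
        β (TrivSqZeroExt.fst x) * β (TrivSqZeroExt.snd y) +
        (α (TrivSqZeroExt.snd x) * α (TrivSqZeroExt.fst y) +
         β (TrivSqZeroExt.snd x) * β (TrivSqZeroExt.fst y)) = 0 := by
      rw [hmul, hmul]
      have hap : α (TrivSqZeroExt.fst x * TrivSqZeroExt.snd y) +
          α (TrivSqZeroExt.snd x * TrivSqZeroExt.fst y) = 0 := by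
        rw [← (hadd _ _).1, h01, a0]
      have hbp : β (TrivSqZeroExt.fst x * TrivSqZeroExt.snd y) +
          β (TrivSqZeroExt.snd x * TrivSqZeroExt.fst y) = 0 := by
        rw [← (hadd _ _).2, h01, b0]
      linear_combination hap + hbp
    refine TrivSqZeroExt.ext ?_ ?_ <;>
      simp only [ψ, TrivSqZeroExt.fst_add, TrivSqZeroExt.snd_add, TrivSqZeroExt.fst_inl,
        TrivSqZeroExt.snd_inl, TrivSqZeroExt.fst_inr, TrivSqZeroExt.snd_inr,
        TrivSqZeroExt.fst_mul, TrivSqZeroExt.snd_mul, TrivSqZeroExt.fst_zero,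
        TrivSqZeroExt.snd_zero, add_zero, zero_add,
        smul_eq_mul, MulOpposite.smul_eq_mul_unop, MulOpposite.unop_op]
    · linear_combination key1
    · linear_combination key2
end

section
/- Let C be a self-orthogonal code of length n over F₄+uF₄ (with respect to the Euclidean inner product). Then its image under the composition φ_{F₂+uF₂} ∘ ψ_{F₄+uF₄} is a self-orthogonal binary linear code of length 4n; moreover if C is self-dual then the binary image is a self-dual [4n, 2n] code. -/
/-!
With `Tr = α + β` (the trace of `F₄/F₂`, as `Tr ω = Tr ω̄ = 1`) and `T (a + b u) = Tr a + Tr b`,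
the binary inner product of the Gray images of `x` and `y` is `T (∑ i, x i * y i)`: this is because
`ω, ω̄` is a trace-orthonormal basis of `F₄`. So Euclidean orthogonality over `F₄ + uF₄` gives
binary orthogonality. Conversely, `T` is nondegenerate and a code is closed under scalar
multiplication, so a word whose Gray image is orthogonal to the image of `C` is itself orthogonal to
`C`. As the Gray map is onto, the image of a self-dual `C` is self-dual, hence of dimension `2n`.
-/

open Matrix Module

lemma two_eq_zero_of_algebra {R : Type*} [CommRing R] [Algebra (ZMod 2) R] : (2 : R) = 0 := by
  rw [← map_ofNat (algebraMap (ZMod 2) R) 2, show (2 : ZMod 2) = 0 from rfl, map_zero]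

section Coordinates

variable {F : Type*} [Field F] [Algebra (ZMod 2) F]

def IsCoordPair (ω : F) (α β : F → ZMod 2) : Prop :=
  ∀ t, t = algebraMap (ZMod 2) F (α t) * ω + algebraMap (ZMod 2) F (β t) * (1 + ω)

def coordTrace (α β : F → ZMod 2) (t : F) : ZMod 2 := α t + β t

lemma eq_zero_of_mul_add_mul_one_add_eq_zero {ω : F} (hω : ω ^ 2 + ω + 1 = 0) {c d : ZMod 2}
    (h : algebraMap (ZMod 2) F c * ω + algebraMap (ZMod 2) F d * (1 + ω) = 0) :
    c = 0 ∧ d = 0 := by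
  have h2 : (2 : F) = 0 := two_eq_zero_of_algebra
  have hbool : ∀ c : ZMod 2, c = 0 ∨ c = 1 := by decide
  rcases hbool c with rfl | rfl <;> rcases hbool d with rfl | rfl <;>
    simp only [map_one, map_zero, one_mul, zero_mul, add_zero, zero_add] at h
  · exact ⟨rfl, rfl⟩
  · exact absurd (by linear_combination hω - ω * h) (one_ne_zero (α := F))
  · exact absurd (by linear_combination hω - (ω + 1) * h) (one_ne_zero (α := F))
  · exact absurd (by linear_combination h - ω * h2) (one_ne_zero (α := F))

variable {ω : F} {α β : F → ZMod 2}

lemma IsCoordPair.coords_eq (hω : ω ^ 2 + ω + 1 = 0) (hrep : IsCoordPair ω α β) {c d : ZMod 2}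
    {t : F} (h : algebraMap (ZMod 2) F c * ω + algebraMap (ZMod 2) F d * (1 + ω) = t) :
    α t = c ∧ β t = d := by
  have h0 : algebraMap (ZMod 2) F (α t - c) * ω +
      algebraMap (ZMod 2) F (β t - d) * (1 + ω) = 0 := by
    rw [map_sub, map_sub]
    linear_combination -hrep t - h
  obtain ⟨h1, h2⟩ := eq_zero_of_mul_add_mul_one_add_eq_zero hω h0
  exact ⟨sub_eq_zero.mp h1, sub_eq_zero.mp h2⟩

lemma IsCoordPair.coords_add (hω : ω ^ 2 + ω + 1 = 0) (hrep : IsCoordPair ω α β) (s t : F) :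
    α (s + t) = α s + α t ∧ β (s + t) = β s + β t :=
  hrep.coords_eq hω (by rw [map_add, map_add]; linear_combination -hrep s - hrep t)

lemma IsCoordPair.coordTrace_add (hω : ω ^ 2 + ω + 1 = 0) (hrep : IsCoordPair ω α β) (s t : F) :
    coordTrace α β (s + t) = coordTrace α β s + coordTrace α β t := by
  obtain ⟨hα, hβ⟩ := hrep.coords_add hω s t
  simp only [coordTrace, hα, hβ]
  ring

-- `ω, ω̄ = 1 + ω` is an orthonormal basis of `F₄` for the trace form `(s, t) ↦ Tr (s t)`
lemma IsCoordPair.coordTrace_mul (hω : ω ^ 2 + ω + 1 = 0) (hrep : IsCoordPair ω α β) (s t : F) :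
    coordTrace α β (s * t) = α s * α t + β s * β t := by
  set a := algebraMap (ZMod 2) F (α s)
  set b := algebraMap (ZMod 2) F (β s)
  set c := algebraMap (ZMod 2) F (α t)
  set d := algebraMap (ZMod 2) F (β t)
  obtain ⟨hα, hβ⟩ := hrep.coords_eq hω (c := α s * β t + β s * α t + β s * β t)
    (d := α s * α t + α s * β t + β s * α t) (t := s * t) (by
      conv_rhs => rw [hrep s, hrep t]
      simp only [map_add, map_mul]
      linear_combination (-(a * c + a * d + b * c + b * d)) * hω +
        ((a * c + a * d + b * c) * (ω + 1)) * (two_eq_zero_of_algebra : (2 : F) = 0))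
  rw [coordTrace, hα, hβ]
  grind

lemma IsCoordPair.coordTrace_self (hω : ω ^ 2 + ω + 1 = 0) (hrep : IsCoordPair ω α β) :
    coordTrace α β ω = 1 := by
  obtain ⟨hα, hβ⟩ := hrep.coords_eq hω (c := 1) (d := 0) (t := ω) (by simp)
  rw [coordTrace, hα, hβ, add_zero]

end Coordinates

section DualNumbers

variable {F : Type*} [Field F] [Algebra (ZMod 2) F] {ω : F} {α β : F → ZMod 2}

open TrivSqZeroExt

/-- The Gray image of `a + b u` is `φ(ψ(a + b u))`, where `ψ` splits `a` and `b` into their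
`(ω, ω̄)`-coordinates and `φ` sends `a' + b' u` to `(b', a' + b')`. -/
def gray (α β : F → ZMod 2) (x : DualNumber F) : Fin 4 → ZMod 2 :=
  ![α x.snd, β x.snd, α x.fst + α x.snd, β x.fst + β x.snd]

def dualTrace (α β : F → ZMod 2) (z : DualNumber F) : ZMod 2 :=
  coordTrace α β z.fst + coordTrace α β z.snd

lemma gray_add (hω : ω ^ 2 + ω + 1 = 0) (hrep : IsCoordPair ω α β) (x y : DualNumber F) :
    gray α β (x + y) = gray α β x + gray α β y := by
  have hα s t := (hrep.coords_add hω s t).1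
  have hβ s t := (hrep.coords_add hω s t).2
  ext j
  fin_cases j <;> simp [gray, hα, hβ] <;> ring

lemma gray_surjective (hω : ω ^ 2 + ω + 1 = 0) (hrep : IsCoordPair ω α β) :
    Function.Surjective (gray α β) := by
  intro v
  let elem (c d : ZMod 2) : F := algebraMap (ZMod 2) F c * ω + algebraMap (ZMod 2) F d * (1 + ω)
  obtain ⟨hα₁, hβ₁⟩ := hrep.coords_eq hω (rfl : elem (v 2 + v 0) (v 3 + v 1) = _)
  obtain ⟨hα₂, hβ₂⟩ := hrep.coords_eq hω (rfl : elem (v 0) (v 1) = _)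
  refine ⟨inl (elem (v 2 + v 0) (v 3 + v 1)) + inr (elem (v 0) (v 1)), ?_⟩
  have hcancel : ∀ a b : ZMod 2, a + b + b = a := by decide
  ext j
  fin_cases j <;> simp [gray, hα₁, hβ₁, hα₂, hβ₂, hcancel]

lemma dualTrace_add (hω : ω ^ 2 + ω + 1 = 0) (hrep : IsCoordPair ω α β) (y z : DualNumber F) :
    dualTrace α β (y + z) = dualTrace α β y + dualTrace α β z := by
  simp only [dualTrace, fst_add, snd_add, hrep.coordTrace_add hω]
  ring

lemma dualTrace_zero (hω : ω ^ 2 + ω + 1 = 0) (hrep : IsCoordPair ω α β) :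
    dualTrace α β 0 = 0 :=
  (AddMonoidHom.mk' (dualTrace α β) (dualTrace_add hω hrep)).map_zero

lemma dualTrace_sum (hω : ω ^ 2 + ω + 1 = 0) (hrep : IsCoordPair ω α β) {ι : Type*}
    (s : Finset ι) (f : ι → DualNumber F) :
    dualTrace α β (∑ i ∈ s, f i) = ∑ i ∈ s, dualTrace α β (f i) :=
  map_sum (AddMonoidHom.mk' (dualTrace α β) (dualTrace_add hω hrep)) f s

lemma gray_dotProduct (hω : ω ^ 2 + ω + 1 = 0) (hrep : IsCoordPair ω α β) (x y : DualNumber F) :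
    gray α β x ⬝ᵥ gray α β y = dualTrace α β (x * y) := by
  simp only [dotProduct, Fin.sum_univ_four, gray, dualTrace, fst_mul, snd_mul, smul_eq_mul,
    op_smul_eq_mul, hrep.coordTrace_add hω, hrep.coordTrace_mul hω, cons_val_zero,
    cons_val_one, cons_val_two, cons_val_three, head_cons,
    tail_cons]
  grind

-- `r = (ω / s.fst) u`, or `r = ω / s.snd` if `s.fst = 0`, makes `r * s = ω u`, of trace `Tr ω = 1`.
lemma eq_zero_of_forall_dualTrace_mul_eq_zero (hω : ω ^ 2 + ω + 1 = 0) (hrep : IsCoordPair ω α β)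
    {s : DualNumber F} (h : ∀ r, dualTrace α β (r * s) = 0) : s = 0 := by
  have htr0 : coordTrace α β 0 = 0 := by
    simpa using hrep.coordTrace_add hω 0 0
  have hωu : dualTrace α β (inr ω) = 1 := by
    simp [dualTrace, htr0, hrep.coordTrace_self hω]
  by_cases hfst : s.fst = 0
  · by_cases hsnd : s.snd = 0
    · exact ext hfst hsnd
    · have := h (inl (ω * s.snd⁻¹))
      rw [show inl (ω * s.snd⁻¹) * s = inr ω by ext <;> simp [hfst, hsnd]] at this
      exact absurd (hωu ▸ this) one_ne_zero
  · have := h (inr (ω * s.fst⁻¹))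
    rw [show inr (ω * s.fst⁻¹) * s = inr ω by ext <;> simp [hfst]] at this
    exact absurd (hωu ▸ this) one_ne_zero

end DualNumbers

section SumDotProduct

variable (K ι κ : Type*) [Field K] [Fintype ι] [Fintype κ]

def sumDotBilin : LinearMap.BilinForm K (ι → κ → K) :=
  ∑ i, (dotProductBilin K K).compl₁₂ (LinearMap.proj i) (LinearMap.proj i)

variable {K ι κ}

lemma sumDotBilin_apply (v w : ι → κ → K) : sumDotBilin K ι κ v w = ∑ i, v i ⬝ᵥ w i := by
  simp [sumDotBilin]

lemma sumDotBilin_comm (v w : ι → κ → K) : sumDotBilin K ι κ v w = sumDotBilin K ι κ w v := by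
  simp only [sumDotBilin_apply, dotProduct_comm]

lemma sumDotBilin_nondegenerate [DecidableEq ι] : (sumDotBilin K ι κ).Nondegenerate := by
  refine (LinearMap.IsRefl.nondegenerate_iff_separatingLeft fun v w h => ?_).mpr fun v hv => ?_
  · rwa [sumDotBilin_comm]
  · ext1 i
    refine dotProduct_eq_zero _ fun u => ?_
    have h := hv (Pi.single i u)
    rwa [sumDotBilin_apply, Finset.sum_eq_single i (fun j _ hj => by simp [hj]) (by simp),
      Pi.single_eq_same] at h

lemma two_mul_finrank_eq_of_eq_orthogonal {W : Submodule K (ι → κ → K)}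
    (hW : (W : Set (ι → κ → K)) = {v | ∀ w ∈ W, ∑ i, v i ⬝ᵥ w i = 0}) :
    2 * finrank K W = Fintype.card ι * Fintype.card κ := by
  classical
  have hortho : (sumDotBilin K ι κ).orthogonal W = W := by
    ext v
    rw [LinearMap.BilinForm.mem_orthogonal_iff, ← SetLike.mem_coe, hW]
    refine forall₂_congr fun w _ => ?_
    rw [sumDotBilin_comm, sumDotBilin_apply]
  have h := LinearMap.BilinForm.finrank_orthogonal sumDotBilin_nondegenerate W
  rw [hortho, finrank_pi_fintype] at h
  have hle : finrank K W ≤ ∑ _ : ι, finrank K (κ → K) :=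
    (Submodule.finrank_le W).trans_eq (finrank_pi_fintype K)
  simp only [finrank_fintype_fun_eq_card, Finset.sum_const, Finset.card_univ,
    smul_eq_mul] at h hle
  omega

end SumDotProduct

section GrayMap

variable {F ι : Type*} [Field F] [Algebra (ZMod 2) F] {ω : F} {α β : F → ZMod 2}

def grayMap (α β : F → ZMod 2) (x : ι → DualNumber F) : ι → Fin 4 → ZMod 2 :=
  fun i => gray α β (x i)

lemma grayMap_add (hω : ω ^ 2 + ω + 1 = 0) (hrep : IsCoordPair ω α β) (x y : ι → DualNumber F) :
    grayMap α β (x + y) = grayMap α β x + grayMap α β y :=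
  funext fun i => gray_add hω hrep (x i) (y i)

variable [Fintype ι]

lemma sum_dotProduct_grayMap (hω : ω ^ 2 + ω + 1 = 0) (hrep : IsCoordPair ω α β)
    (x y : ι → DualNumber F) :
    ∑ i, grayMap α β x i ⬝ᵥ grayMap α β y i = dualTrace α β (∑ i, x i * y i) := by
  rw [dualTrace_sum hω hrep]
  exact Finset.sum_congr rfl fun i _ => gray_dotProduct hω hrep (x i) (y i)

lemma sum_dotProduct_grayMap_eq_zero (hω : ω ^ 2 + ω + 1 = 0) (hrep : IsCoordPair ω α β)
    {x y : ι → DualNumber F} (h : ∑ i, x i * y i = 0) :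
    ∑ i, grayMap α β x i ⬝ᵥ grayMap α β y i = 0 := by
  rw [sum_dotProduct_grayMap hω hrep, h, dualTrace_zero hω hrep]

-- `C` is closed under `y ↦ r • y`, so the trace of `r * ∑ i, x i * y i` vanishes for all `r`.
lemma sum_mul_eq_zero_of_grayMap_orthogonal (hω : ω ^ 2 + ω + 1 = 0)
    (hrep : IsCoordPair ω α β) {C : Submodule (DualNumber F) (ι → DualNumber F)}
    {x : ι → DualNumber F} (hx : ∀ y ∈ C, ∑ i, grayMap α β x i ⬝ᵥ grayMap α β y i = 0)
    {y : ι → DualNumber F} (hy : y ∈ C) : ∑ i, x i * y i = 0 := by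
  refine eq_zero_of_forall_dualTrace_mul_eq_zero hω hrep fun r => ?_
  rw [← hx (r • y) (C.smul_mem r hy), sum_dotProduct_grayMap hω hrep, Finset.mul_sum]
  simp only [Pi.smul_apply, smul_eq_mul, mul_left_comm]

lemma image_grayMap_eq_orthogonal (hω : ω ^ 2 + ω + 1 = 0) (hrep : IsCoordPair ω α β)
    {C : Submodule (DualNumber F) (ι → DualNumber F)}
    (hC : (C : Set (ι → DualNumber F)) = {x | ∀ y ∈ C, ∑ i, x i * y i = 0}) :
    grayMap α β '' (C : Set (ι → DualNumber F)) =
      {v | ∀ w ∈ grayMap α β '' (C : Set (ι → DualNumber F)), ∑ i, v i ⬝ᵥ w i = 0} := by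
  have hself {x} (hx : x ∈ C) {y} (hy : y ∈ C) : ∑ i, x i * y i = 0 := by
    rw [← SetLike.mem_coe, hC] at hx
    exact hx y hy
  refine subset_antisymm ?_ fun v hv => ?_
  · rintro _ ⟨x, hx, rfl⟩ _ ⟨y, hy, rfl⟩
    exact sum_dotProduct_grayMap_eq_zero hω hrep (hself hx hy)
  · obtain ⟨x, rfl⟩ := (gray_surjective hω hrep).comp_left v
    refine ⟨x, ?_, rfl⟩
    rw [hC]
    exact fun y hy => sum_mul_eq_zero_of_grayMap_orthogonal hω hrep
      (fun y hy => hv _ ⟨y, hy, rfl⟩) hy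

end GrayMap

/-- The binary Gray image of a self-orthogonal code over F₄+uF₄ is a
self-orthogonal binary linear code of length 4n; if the code is self-dual,
the binary image is a self-dual [4n, 2n] code. -/
theorem stmt_9 {n : ℕ} (ω : GaloisField 2 2) (hω : ω ^ 2 + ω + 1 = 0)
    (α β : GaloisField 2 2 → ZMod 2)
    (hrep : ∀ t, t = algebraMap (ZMod 2) (GaloisField 2 2) (α t) * ω +
        algebraMap (ZMod 2) (GaloisField 2 2) (β t) * (1 + ω))
    (C : Submodule (DualNumber (GaloisField 2 2))
      (Fin n → DualNumber (GaloisField 2 2)))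
    (hso : ∀ x ∈ C, ∀ y ∈ C, ∑ i, x i * y i = 0) :
    let Φ : (Fin n → DualNumber (GaloisField 2 2)) → (Fin n → Fin 4 → ZMod 2) :=
      fun x i => ![α (TrivSqZeroExt.snd (x i)), β (TrivSqZeroExt.snd (x i)),
        α (TrivSqZeroExt.fst (x i)) + α (TrivSqZeroExt.snd (x i)),
        β (TrivSqZeroExt.fst (x i)) + β (TrivSqZeroExt.snd (x i))]
    (∀ x ∈ C, ∀ y ∈ C, ∑ i, ∑ j, Φ x i j * Φ y i j = 0) ∧
    (∃ D : Submodule (ZMod 2) (Fin n → Fin 4 → ZMod 2),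
      (D : Set (Fin n → Fin 4 → ZMod 2)) = Φ '' (C : Set _)) ∧
    ((C : Set (Fin n → DualNumber (GaloisField 2 2)))
        = {x | ∀ y ∈ C, ∑ i, x i * y i = 0} →
      Nat.card (Φ '' (C : Set _)) = 2 ^ (2 * n) ∧
      Φ '' (C : Set _) = {v | ∀ w ∈ Φ '' (C : Set _), ∑ i, ∑ j, v i j * w i j = 0}) := by
  intro Φ
  let D : Submodule (ZMod 2) (Fin n → Fin 4 → ZMod 2) := AddSubgroup.toZModSubmodule 2
    (C.toAddSubgroup.map (AddMonoidHom.mk' (grayMap α β) (grayMap_add hω hrep)))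
  have hD : (D : Set (Fin n → Fin 4 → ZMod 2)) = grayMap α β '' C := rfl
  refine ⟨fun x hx y hy => sum_dotProduct_grayMap_eq_zero hω hrep (hso x hx y hy), ⟨D, hD⟩,
    fun hC => ⟨?_, image_grayMap_eq_orthogonal hω hrep hC⟩⟩
  have hfinrank := two_mul_finrank_eq_of_eq_orthogonal (hD ▸ image_grayMap_eq_orthogonal hω hrep hC)
  rw [Fintype.card_fin, Fintype.card_fin] at hfinrank
  change Nat.card D = _
  rw [natCard_eq_pow_finrank (K := ZMod 2), Nat.card_zmod]
  congr 1
  omega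
end

section
/- Let C be a linear code of length n over F₄+uF₄ and let C' = μ(C) be its projection to F₄ under μ(a+bu) = a applied coordinatewise. If d and d' are the minimum Lee distances of C and C' respectively (both codes nonzero), then d ≤ 2d'. -/
/-- If `C` is a linear code over F₄+uF₄ and `C' = μ(C)` its projection to F₄,
then the minimum Lee distances satisfy `d ≤ 2d'`. -/
theorem stmt_11 {n : ℕ} (ω : GaloisField 2 2) (hω : ω ^ 2 + ω + 1 = 0)
    (α β : GaloisField 2 2 → ZMod 2)
    (hrep : ∀ t, t = algebraMap (ZMod 2) (GaloisField 2 2) (α t) * ω +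
        algebraMap (ZMod 2) (GaloisField 2 2) (β t) * (1 + ω))
    (C : Submodule (DualNumber (GaloisField 2 2))
      (Fin n → DualNumber (GaloisField 2 2)))
    (h1 : ∃ x ∈ C, x ≠ 0)
    (h2 : ∃ x ∈ C, (fun i => TrivSqZeroExt.fst (x i)) ≠ 0) :
    let wtL : (Fin n → DualNumber (GaloisField 2 2)) → ℕ := fun x => ∑ i,
      ((if α (TrivSqZeroExt.snd (x i)) ≠ 0 then 1 else 0) +
       (if β (TrivSqZeroExt.snd (x i)) ≠ 0 then 1 else 0) +
       (if α (TrivSqZeroExt.fst (x i)) + α (TrivSqZeroExt.snd (x i)) ≠ 0 then 1 else 0) +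
       (if β (TrivSqZeroExt.fst (x i)) + β (TrivSqZeroExt.snd (x i)) ≠ 0 then 1 else 0))
    let wtL4 : (Fin n → GaloisField 2 2) → ℕ := fun v => ∑ i,
      ((if α (v i) ≠ 0 then 1 else 0) + (if β (v i) ≠ 0 then 1 else 0))
    sInf {m | ∃ x ∈ C, x ≠ 0 ∧ wtL x = m} ≤
      2 * sInf {m | ∃ x ∈ C, (fun i => TrivSqZeroExt.fst (x i)) ≠ 0 ∧
        wtL4 (fun i => TrivSqZeroExt.fst (x i)) = m} := by
  intro wtL wtL4
  have two0 : (2 : GaloisField 2 2) = 0 := by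
    simpa using CharP.cast_eq_zero (GaloisField 2 2) 2
  have hcases : ∀ c : ZMod 2, c = 0 ∨ c = 1 := by decide
  have key : ∀ a b : ZMod 2, algebraMap (ZMod 2) (GaloisField 2 2) a * ω +
      algebraMap (ZMod 2) (GaloisField 2 2) b * (1 + ω) = 0 → a = 0 ∧ b = 0 := by
    intro a b h
    rcases hcases a with ha | ha <;> rcases hcases b with hb | hb <;> subst ha <;> subst hb <;>
      simp only [map_zero, map_one, zero_mul, one_mul, zero_add, add_zero] at h ⊢
    · trivial
    · exact absurd (by linear_combination hω - ω * h) (one_ne_zero)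
    · exact absurd (by linear_combination hω - (ω + 1) * h) (one_ne_zero)
    · exact absurd (by linear_combination h - ω * two0) (one_ne_zero)
  obtain ⟨hα0, hβ0⟩ := key (α 0) (β 0) (hrep 0).symm
  have hne : ({m | ∃ x ∈ C, (fun i => TrivSqZeroExt.fst (x i)) ≠ 0 ∧
      wtL4 (fun i => TrivSqZeroExt.fst (x i)) = m}).Nonempty := by
    obtain ⟨x, hxC, hx⟩ := h2
    exact ⟨_, x, hxC, hx, rfl⟩
  obtain ⟨x, hxC, hx0, hxw⟩ := Nat.sInf_mem hne
  rw [← hxw]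
  apply Nat.sInf_le
  have hy : ∀ i, ((DualNumber.eps : DualNumber (GaloisField 2 2)) • x) i = (DualNumber.eps : DualNumber (GaloisField 2 2)) * x i := by
    intro i; simp [Pi.smul_apply, smul_eq_mul]
  have hfst : ∀ i, TrivSqZeroExt.fst (((DualNumber.eps : DualNumber (GaloisField 2 2)) • x) i) = 0 := by
    intro i; rw [hy]; simp
  have hsnd : ∀ i, TrivSqZeroExt.snd (((DualNumber.eps : DualNumber (GaloisField 2 2)) • x) i) = TrivSqZeroExt.fst (x i) := by
    intro i; rw [hy]; simp
  simp only [Set.mem_setOf_eq]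
  refine ⟨(DualNumber.eps : DualNumber (GaloisField 2 2)) • x, C.smul_mem _ hxC, ?_, ?_⟩
  · intro hzero
    apply hx0
    funext i
    have : TrivSqZeroExt.snd (((DualNumber.eps : DualNumber (GaloisField 2 2)) • x) i) = 0 := by rw [hzero]; simp
    rw [hsnd] at this
    simpa using this
  · show wtL ((DualNumber.eps : DualNumber (GaloisField 2 2)) • x) = 2 * wtL4 fun i => TrivSqZeroExt.fst (x i)
    simp only [wtL, wtL4, Finset.mul_sum]
    refine Finset.sum_congr rfl fun i _ => ?_
    rw [hfst, hsnd, hα0, hβ0, zero_add, zero_add]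
    ring
end

section
/- Let A be a binary circulant 10×10 matrix with first row (0,1,0,0,0,1,1,0,0,1) and B a binary circulant 10×10 matrix with first row (1,1,1,0,1,0,0,1,1,1). Then A·Aᵀ + B·Bᵀ = I₁₀ over F₂, and hence the four-circulant code generated by [I₂₀ | (A B; Bᵀ Aᵀ)] is a self-dual binary code of length 40. -/
open Matrix

lemma aux_selfdual {F : Type*} [Field F] {ι κ : Type*} [Fintype ι] [Fintype κ]
    [DecidableEq ι] [DecidableEq κ]
    (G : Matrix ι (ι ⊕ κ) F)
    (hId : ∀ i j, G i (Sum.inl j) = if i = j then 1 else 0)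
    (hcard : Fintype.card κ = Fintype.card ι)
    (hGGt : G * Gᵀ = 0) :
    (Submodule.span F (Set.range G) : Set ((ι ⊕ κ) → F))
      = {x | ∀ y ∈ Submodule.span F (Set.range G), ∑ j, x j * y j = 0} := by
  set D := Submodule.span F (Set.range G) with hDdef
  have hD : D = LinearMap.range G.vecMulLinear := (range_vecMulLinear G).symm
  have hinj : Function.Injective G.vecMulLinear := by
    intro c c' h
    funext j
    have h1 : ∀ d : ι → F, (G.vecMulLinear d) (Sum.inl j) = d j := by
      intro d
      show (d ᵥ* G) (Sum.inl j) = d j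
      simp only [Matrix.vecMul, dotProduct, hId, mul_ite, mul_one, mul_zero]
      simp
    rw [← h1 c, ← h1 c', h]
  have hrankrange : Module.finrank F (LinearMap.range G.vecMulLinear) = Fintype.card ι := by
    rw [LinearMap.finrank_range_of_inj hinj, Module.finrank_fintype_fun_eq_card]
  have hkerset : {x : (ι ⊕ κ) → F | ∀ y ∈ D, ∑ j, x j * y j = 0}
      = ↑(LinearMap.ker G.mulVecLin) := by
    ext x
    simp only [Set.mem_setOf_eq, SetLike.mem_coe, LinearMap.mem_ker]
    constructor
    · intro h
      funext i
      have := h (G i) (Submodule.subset_span ⟨i, rfl⟩)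
      show (G *ᵥ x) i = 0
      rw [← this]
      simp [Matrix.mulVec, dotProduct, mul_comm]
    · intro h y hy
      induction hy using Submodule.span_induction with
      | mem y hy =>
        obtain ⟨i, rfl⟩ := hy
        have := congrFun h i
        simpa [Matrix.mulVec, dotProduct, mul_comm] using this
      | zero => simp
      | add y z _ _ hy hz => simp [mul_add, Finset.sum_add_distrib, hy, hz]
      | smul c y _ hy =>
        simp only [Pi.smul_apply, smul_eq_mul, mul_left_comm, ← Finset.mul_sum, hy, mul_zero]
  have hle : D ≤ LinearMap.ker G.mulVecLin := by
    rw [hD]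
    rintro x ⟨c, rfl⟩
    show G *ᵥ (c ᵥ* G) = 0
    rw [← Matrix.mulVec_transpose, Matrix.mulVec_mulVec, hGGt, Matrix.zero_mulVec]
  have hrn := LinearMap.finrank_range_add_finrank_ker G.mulVecLin
  have hdom : Module.finrank F ((ι ⊕ κ) → F) = Fintype.card ι + Fintype.card κ := by
    rw [Module.finrank_fintype_fun_eq_card, Fintype.card_sum]
  have hrank : Module.finrank F (LinearMap.range G.mulVecLin) = Fintype.card ι := by
    have h1 : G.rank = Gᵀ.rank := (Matrix.rank_transpose G).symm
    have h2 : Gᵀ.rank = Fintype.card ι := by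
      unfold Matrix.rank
      rw [Matrix.mulVecLin_transpose]
      exact hrankrange
    exact h1.trans h2
  have hkerrank : Module.finrank F (LinearMap.ker G.mulVecLin) = Fintype.card ι := by
    rw [hdom, hrank, hcard] at hrn
    omega
  have hDK : D = LinearMap.ker G.mulVecLin := by
    apply Submodule.eq_of_le_of_finrank_eq hle
    rw [hkerrank, hD, hrankrange]
  rw [hkerset, hDK]

set_option maxRecDepth 40000 in
/-- The specific binary circulant matrices with first rows
`(0,1,0,0,0,1,1,0,0,1)` and `(1,1,1,0,1,0,0,1,1,1)` satisfy
`A·Aᵀ + B·Bᵀ = I`, and the resulting four-circulant code of length 40 is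
self-dual. -/
theorem stmt_18 (A B : Matrix (Fin 10) (Fin 10) (ZMod 2))
    (hA : ∀ i j, A i j = ![0,1,0,0,0,1,1,0,0,1] (j - i))
    (hB : ∀ i j, B i j = ![1,1,1,0,1,0,0,1,1,1] (j - i)) :
    A * Aᵀ + B * Bᵀ = 1 ∧
    (let M := Matrix.fromBlocks A B Bᵀ Aᵀ
     let r : Fin 10 ⊕ Fin 10 → ((Fin 10 ⊕ Fin 10) ⊕ (Fin 10 ⊕ Fin 10)) → ZMod 2 :=
       fun i => Sum.elim (fun j => if i = j then 1 else 0) (fun j => M i j)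
     let D := Submodule.span (ZMod 2) (Set.range r)
     (D : Set (((Fin 10 ⊕ Fin 10) ⊕ (Fin 10 ⊕ Fin 10)) → ZMod 2))
       = {x | ∀ y ∈ D, ∑ j, x j * y j = 0}) := by
  have hA' : A = Matrix.of (fun i j => ![0,1,0,0,0,1,1,0,0,1] (j - i)) := by
    ext i j; exact hA i j
  have hB' : B = Matrix.of (fun i j => ![1,1,1,0,1,0,0,1,1,1] (j - i)) := by
    ext i j; exact hB i j
  subst hA' hB'
  refine ⟨by decide, ?_⟩
  exact aux_selfdual
    (Matrix.of (fun i => Sum.elim (fun j => if i = j then 1 else 0)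
      (fun j => Matrix.fromBlocks
        (Matrix.of (fun i j => ![0,1,0,0,0,1,1,0,0,1] (j - i)))
        (Matrix.of (fun i j => ![1,1,1,0,1,0,0,1,1,1] (j - i)))
        (Matrix.of (fun i j => ![1,1,1,0,1,0,0,1,1,1] (j - i)))ᵀ
        (Matrix.of (fun i j => ![0,1,0,0,0,1,1,0,0,1] (j - i)))ᵀ i j)))
    (fun i j => rfl) (by simp) (by decide)
end
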